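/- arXiv:1110.0230 — 2 statements merged into one kernel-verified Lean document; each statement's English description precedes it below -/
import Mathlib

section
/- Let κ be an algebraically closed field of characteristic p. Then the additive map W(κ) → W(κ) on Witt vectors given by x ↦ x - σ(x), where σ is the Frobenius of W(κ), is surjective. -/
/-!
`𝕎 κ` is `p`-adically complete and `x ↦ x - F x` is additive, hence `ℤ`-linear, so it is
surjective as soon as it is surjective modulo `p`. Modulo `p` it is `z ↦ z - z ^ p` on `κ`,
which is onto because `κ` is algebraically closed.
-/

open Polynomial

theorem IsAlgClosed.exists_sub_pow_eq {K : Type*} [Field K] [IsAlgClosed K] {p : ℕ} (hp : 1 < p)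
    (c : K) : ∃ z : K, z - z ^ p = c := by
  have hdeg : (X ^ p - X + C c : K[X]).natDegree = p := by
    rw [natDegree_add_C, FiniteField.X_pow_card_sub_X_natDegree_eq K hp]
  obtain ⟨z, hz⟩ := IsAlgClosed.exists_root (X ^ p - X + C c : K[X])
    (degree_ne_of_natDegree_ne (n := 0) (by omega))
  refine ⟨z, ?_⟩
  simp only [IsRoot, eval_add, eval_sub, eval_pow, eval_X, eval_C] at hz
  linear_combination -hz

namespace WittVector

variable {p : ℕ} [hp : Fact p.Prime] {k : Type*} [CommRing k] [CharP k p]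

local notation "𝕎" => WittVector p

theorem coeff_zero_sub_frobenius (x : 𝕎 k) :
    (x - frobenius x).coeff 0 = x.coeff 0 - x.coeff 0 ^ p := by
  rw [← constantCoeff_apply, map_sub, constantCoeff_apply, constantCoeff_apply,
    coeff_frobenius_charP]

variable [PerfectRing k p]

instance isAdicCompleteIntSpanP : IsAdicComplete (Ideal.span {(p : ℤ)}) (𝕎 k) := by
  rw [← IsAdicComplete.map_algebraMap_iff (S := 𝕎 k), Ideal.map_span, Set.image_singleton,
    map_natCast]
  infer_instance

theorem surjective_of_coeff_zero_comp_surjective {f : 𝕎 k →+ 𝕎 k}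
    (hf : Function.Surjective fun x => (f x).coeff 0) : Function.Surjective f := by
  refine surjective_of_mkQ_comp_surjective (I := Ideal.span {(p : ℤ)}) (f := f.toIntLinearMap) ?_
  rintro ⟨y⟩
  obtain ⟨x, hx⟩ := hf (y.coeff 0)
  refine ⟨x, (Submodule.Quotient.eq _).mpr ?_⟩
  have hmem : f x - y ∈ Ideal.span {(p : 𝕎 k)} := by
    rw [mem_span_p_iff_coeff_zero_eq_zero, ← constantCoeff_apply, map_sub, constantCoeff_apply,
      constantCoeff_apply]
    exact sub_eq_zero.mpr hx
  obtain ⟨w, hw⟩ := Ideal.mem_span_singleton'.mp hmem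
  have hsmul : (p : ℤ) • w = f x - y := by rw [← hw, zsmul_eq_mul, mul_comm, Int.cast_natCast]
  rw [AddMonoidHom.coe_toIntLinearMap, ← hsmul]
  exact Submodule.smul_mem_smul (Ideal.mem_span_singleton_self _) trivial

end WittVector

/-- Let κ be an algebraically closed field of characteristic p. Then the additive map
`W(κ) → W(κ)` on Witt vectors given by `x ↦ x - σ(x)`, where `σ` is the Frobenius of `W(κ)`,
is surjective. -/
theorem stmt_0 (p : ℕ) [hp : Fact p.Prime] (κ : Type*) [Field κ] [IsAlgClosed κ] [CharP κ p] :
    Function.Surjective (fun x : WittVector p κ => x - WittVector.frobenius x) := by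
  refine WittVector.surjective_of_coeff_zero_comp_surjective
    (f := AddMonoidHom.id (WittVector p κ) - WittVector.frobenius.toAddMonoidHom) fun c => ?_
  obtain ⟨z, hz⟩ := IsAlgClosed.exists_sub_pow_eq hp.out.one_lt c
  refine ⟨WittVector.teichmuller p z, ?_⟩
  simp only [AddMonoidHom.sub_apply, AddMonoidHom.id_apply, RingHom.toAddMonoidHom_eq_coe,
    AddMonoidHom.coe_coe, WittVector.coeff_zero_sub_frobenius, WittVector.teichmuller_coeff_zero, hz]
end

section
/- Let A be an inverse system (M_m)_{m≥1} of finite abelian groups with M_m a Z/ℓ^m Z-module, satisfying the Mittag-Leffler condition. If each transition map M_{m+1} → M_m induces an isomorphism M_{m+1}/ℓ^m ≅ M_m for m large, then M = lim M_m is a finitely generated Z_ℓ-module and M/ℓ^m ≅ M_m for m large. -/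
/-- Iterated transition maps of an inverse system indexed by ℕ. -/
def chainMap {M : ℕ → Type*} [∀ m, AddCommGroup (M m)]
    (t : ∀ m, M (m + 1) →+ M m) : ∀ (m k : ℕ), M (m + k) →+ M m
  | _, 0 => AddMonoidHom.id _
  | m, (k + 1) => (chainMap t m k).comp (t (m + k))

/-- The inverse limit of an inverse system of abelian groups, as a subgroup of the product. -/
def invLimit {M : ℕ → Type*} [∀ m, AddCommGroup (M m)] (t : ∀ m, M (m + 1) →+ M m) :
    AddSubgroup (∀ m, M m) where
  carrier := {x | ∀ m, t m (x (m + 1)) = x m}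
  add_mem' := by
    intro a b ha hb m
    simp [map_add, ha m, hb m]
  zero_mem' := by
    intro m
    simp
  neg_mem' := by
    intro a ha m
    simp [map_neg, ha m]

/-- A ℤ_ℓ-module structure compatible with the ℤ-module structure, which is finitely
generated. -/
def IsFinZlModule (ℓ : ℕ) [Fact ℓ.Prime] (L : Type*) [AddCommGroup L]
    [Module ℤ_[ℓ] L] : Prop :=
  (∀ (n : ℤ) (x : L), ((n : ℤ_[ℓ]) • x) = n • x) ∧ Module.Finite ℤ_[ℓ] L

/-!
From some level `N` on, the transition maps are surjective with kernel `ℓ^m M_{m+1}`. Since the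
levels are finite, König's lemma lifts points of `M_m` and levelwise solutions of `ℓ^m y = x` to
the limit `L`, which gives `L/ℓ^m ≅ M_m` for `m ≥ N`. Each `M_m` is a `ℤ/ℓ^m`-module, so `ℤ_ℓ`
acts on `L` levelwise. Lifts `g` of the elements of `M_n` (`n > N`) satisfy `L = span g + ℓL`,
hence `L = span g + ℓ^k L` for all `k`: every `x ∈ L` agrees at level `k` with some
`∑ c_k(b) g_b`. A limit point of the `c_k` in the compact space `ℤ_ℓ^{M_n}` gives a combination
agreeing with `x` at every level.
-/

section Padic

variable {ℓ : ℕ} [Fact ℓ.Prime]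

noncomputable abbrev AddCommGroup.padicIntModule {A : Type*} [AddCommGroup A] {m : ℕ}
    (h : ∀ x : A, ℓ ^ m • x = 0) : Module ℤ_[ℓ] A :=
  letI := AddCommGroup.zmodModule h
  Module.compHom A (PadicInt.toZModPow m)

lemma smul_eq_smul_of_pow_dvd_sub {A : Type*} [AddCommGroup A] [Module ℤ_[ℓ] A] {m : ℕ}
    (hA : ∀ x : A, ℓ ^ m • x = 0) {a b : ℤ_[ℓ]} (hab : (ℓ : ℤ_[ℓ]) ^ m ∣ a - b) (x : A) :
    a • x = b • x := by
  obtain ⟨c, hc⟩ := hab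
  rw [← sub_eq_zero, ← sub_smul, hc, mul_comm, mul_smul, ← Nat.cast_pow,
    Nat.cast_smul_eq_nsmul, hA, smul_zero]

lemma map_smul_of_pow_nsmul_eq_zero {A B : Type*} [AddCommGroup A] [Module ℤ_[ℓ] A]
    [AddCommGroup B] [Module ℤ_[ℓ] B] {n : ℕ} (hA : ∀ x : A, ℓ ^ n • x = 0)
    (hB : ∀ y : B, ℓ ^ n • y = 0) (f : A →+ B) (a : ℤ_[ℓ]) (x : A) : f (a • x) = a • f x := by
  have h := Ideal.mem_span_singleton.mp (PadicInt.appr_spec n a)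
  rw [smul_eq_smul_of_pow_dvd_sub hA h, smul_eq_smul_of_pow_dvd_sub hB h,
    Nat.cast_smul_eq_nsmul, Nat.cast_smul_eq_nsmul, map_nsmul]

lemma PadicInt.exists_forall_exists_ge_pow_dvd_sub {ι : Type*} [Fintype ι]
    (c : ℕ → ι → ℤ_[ℓ]) :
    ∃ c₀ : ι → ℤ_[ℓ], ∀ m, ∃ k ≥ m, ∀ i, (ℓ : ℤ_[ℓ]) ^ m ∣ c k i - c₀ i := by
  obtain ⟨c₀, -, φ, hφ, hlim⟩ := isCompact_univ.tendsto_subseq (x := c) fun _ => Set.mem_univ _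
  refine ⟨c₀, fun m => ?_⟩
  have hr : (0 : ℝ) < (ℓ : ℝ) ^ (-(m : ℤ)) :=
    zpow_pos (by exact_mod_cast (Fact.out : ℓ.Prime).pos) _
  obtain ⟨n, hn, hm⟩ :=
    ((hlim.eventually (Metric.closedBall_mem_nhds c₀ hr)).and
      (hφ.tendsto_atTop.eventually_ge_atTop m)).exists
  refine ⟨φ n, hm, fun i => ?_⟩
  rw [← Ideal.mem_span_singleton, ← PadicInt.norm_le_pow_iff_mem_span_pow]
  exact (norm_le_pi_norm (c (φ n) - c₀) i).trans (mem_closedBall_iff_norm.mp hn)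

end Padic

lemma LinearMap.exists_eq_add_pow_smul {R N L : Type*} [Semiring R] [AddCommMonoid N]
    [Module R N] [AddCommMonoid L] [Module R L] (f : N →ₗ[R] L) (r : R)
    (h : ∀ z, ∃ c w, z = f c + r • w) (k : ℕ) (z : L) : ∃ c w, z = f c + r ^ k • w := by
  induction k with
  | zero => exact ⟨0, z, by simp⟩
  | succ k ih =>
    obtain ⟨c, w, rfl⟩ := ih
    obtain ⟨c', w', rfl⟩ := h w
    exact ⟨c + r ^ k • c', w', by
      rw [map_add, map_smul, smul_add, smul_smul, ← pow_succ, add_assoc]⟩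

section InverseSystem

variable {M : ℕ → Type*} [∀ m, AddCommGroup (M m)] {t : ∀ m, M (m + 1) →+ M m}

lemma chainMap_surjective (m : ℕ) (hs : ∀ i, m ≤ i → Function.Surjective (t i)) (k : ℕ) :
    Function.Surjective (chainMap t m k) := by
  induction k with
  | zero => exact Function.surjective_id
  | succ k ih => exact ih.comp (hs (m + k) (Nat.le_add_right m k))

namespace invLimit

lemma apply_eq_zero_of_le (x : invLimit t) {k m : ℕ} (hkm : k ≤ m)
    (hx : (x : ∀ n, M n) m = 0) : (x : ∀ n, M n) k = 0 := by
  induction hkm with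
  | refl => exact hx
  | step _ ih => exact ih (by rw [← x.2, hx, map_zero])

open CategoryTheory in
/-- König's lemma for an inverse system of finite groups. -/
lemma exists_forall_apply_mem [∀ m, Finite (M m)] (S : ∀ k, Set (M k))
    (hne : ∀ k, (S k).Nonempty) (hmaps : ∀ k, Set.MapsTo (t k) (S (k + 1)) (S k)) :
    ∃ x : invLimit t, ∀ k, (x : ∀ n, M n) k ∈ S k := by
  let F : ℕᵒᵖ ⥤ Type _ := Functor.ofOpSequence (X := fun n => S n)
    (fun n => TypeCat.ofHom fun u => ⟨t n u, hmaps n u.2⟩)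
  have : ∀ j, Finite (F.obj j) := fun _ => Subtype.finite
  have : ∀ j, Nonempty (F.obj j) := fun j => (hne j.unop).to_subtype
  obtain ⟨s, hs⟩ := nonempty_sections_of_finite_inverse_system F
  refine ⟨⟨fun k => (s (.op k)).1, fun k => ?_⟩, fun k => (s (.op k)).2⟩
  have := hs (homOfLE (Nat.le_succ k)).op
  rw [Functor.ofOpSequence_map_homOfLE_succ] at this
  exact congrArg Subtype.val this

lemma surjective_eval [∀ m, Finite (M m)] (m : ℕ)
    (hs : ∀ i, m ≤ i → Function.Surjective (t i)) :
    Function.Surjective (fun x : invLimit t => (x : ∀ n, M n) m) := by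
  intro b
  let S k : Set (M k) := {u | ∀ j (h : m + j = k), chainMap t m j (h ▸ u) = b}
  have hne k : (S k).Nonempty := by
    by_cases hk : m ≤ k
    · obtain ⟨j, rfl⟩ := Nat.exists_eq_add_of_le hk
      obtain ⟨u, hu⟩ := chainMap_surjective m hs j b
      refine ⟨u, fun j' h => ?_⟩
      obtain rfl := Nat.add_left_cancel h
      exact hu
    · exact ⟨0, fun j h => absurd h (by omega)⟩
  have hmaps k : Set.MapsTo (t k) (S (k + 1)) (S k) := by
    intro u hu j h
    subst h
    exact hu (j + 1) rfl
  obtain ⟨x, hx⟩ := exists_forall_apply_mem S hne hmaps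
  exact ⟨x, hx m 0 rfl⟩

lemma exists_pow_nsmul_eq_apply {ℓ : ℕ} (m : ℕ) (hs : ∀ i, m ≤ i → Function.Surjective (t i))
    (hker : ∀ i, m ≤ i → ∀ x : M (i + 1), t i x = 0 → ∃ y, ℓ ^ i • y = x)
    (x : invLimit t) (hx : (x : ∀ n, M n) m = 0) (k : ℕ) :
    ∃ u : M k, ℓ ^ m • u = (x : ∀ n, M n) k := by
  rcases le_total k m with hkm | hmk
  · exact ⟨0, by rw [smul_zero, apply_eq_zero_of_le x hkm hx]⟩
  induction hmk with
  | refl => exact ⟨0, by rw [smul_zero, hx]⟩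
  | @step k hmk ih =>
    obtain ⟨u, hu⟩ := ih
    obtain ⟨w, rfl⟩ := hs k hmk u
    obtain ⟨z, hz⟩ := hker k hmk ((x : ∀ n, M n) (k + 1) - ℓ ^ m • w)
      (by rw [map_sub, map_nsmul, hu, x.2, sub_self])
    refine ⟨w + ℓ ^ (k - m) • z, ?_⟩
    rw [smul_add, smul_smul, ← pow_add, Nat.add_sub_cancel' hmk, hz, add_sub_cancel]

lemma exists_pow_nsmul_eq_of_apply_eq_zero [∀ m, Finite (M m)] {ℓ : ℕ} (m : ℕ)
    (hs : ∀ i, m ≤ i → Function.Surjective (t i))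
    (hker : ∀ i, m ≤ i → ∀ x : M (i + 1), t i x = 0 → ∃ y, ℓ ^ i • y = x)
    (x : invLimit t) (hx : (x : ∀ n, M n) m = 0) : ∃ y : invLimit t, ℓ ^ m • y = x := by
  obtain ⟨y, hy⟩ := exists_forall_apply_mem (fun k => {u : M k | ℓ ^ m • u = (x : ∀ n, M n) k})
    (exists_pow_nsmul_eq_apply m hs hker x hx) fun k u (hu : ℓ ^ m • u = _) =>
      show ℓ ^ m • t k u = _ by rw [← map_nsmul, hu, x.2]
  exact ⟨y, Subtype.ext (funext hy)⟩

abbrev module {R : Type*} [Ring R] [∀ m, Module R (M m)]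
    (ht : ∀ m (a : R) (x : M (m + 1)), t m (a • x) = a • t m x) : Module R (invLimit t) :=
  letI : SMul R (invLimit t) := ⟨fun a x => ⟨a • (x : ∀ n, M n), fun m => by
    change t m (a • (x : ∀ n, M n) (m + 1)) = a • (x : ∀ n, M n) m
    rw [ht, x.2]⟩⟩
  Function.Injective.module R (invLimit t).subtype Subtype.val_injective fun _ _ => rfl

variable {ℓ : ℕ} [Fact ℓ.Prime] [∀ m, Module ℤ_[ℓ] (M m)]

lemma module_finite (ht : ∀ m (a : ℤ_[ℓ]) (x : M (m + 1)), t m (a • x) = a • t m x)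
    (htor : ∀ m (x : M m), ℓ ^ m • x = 0) (n : ℕ) [Finite (M n)]
    (hsurj : Function.Surjective (fun x : invLimit t => (x : ∀ j, M j) n))
    (hker : ∀ x : invLimit t, (x : ∀ j, M j) n = 0 → ∃ y, ℓ • y = x) :
    letI := module ht; Module.Finite ℤ_[ℓ] (invLimit t) := by
  let _ := module ht
  classical
  have := Fintype.ofFinite (M n)
  choose g hg using hsurj
  let Φ := Fintype.linearCombination ℤ_[ℓ] g
  have hcoord c m :
      ((Φ c : invLimit t) : ∀ j, M j) m = ∑ i, c i • ((g i : invLimit t) : ∀ j, M j) m := by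
    simp only [Φ, Fintype.linearCombination_apply, AddSubgroup.val_finsetSum, Finset.sum_apply]
    rfl
  have hmod z : ∃ c w, z = Φ c + (ℓ : ℤ_[ℓ]) • w := by
    obtain ⟨w, hw⟩ := hker (z - g ((z : ∀ j, M j) n)) (by simp [hg])
    refine ⟨Pi.single ((z : ∀ j, M j) n) 1, w, ?_⟩
    rw [Nat.cast_smul_eq_nsmul, hw, Fintype.linearCombination_apply_single, one_smul,
      add_sub_cancel]
  refine Module.Finite.of_surjective Φ fun z => ?_
  have happrox k : ∃ c, ∀ m ≤ k, ((Φ c : invLimit t) : ∀ j, M j) m = (z : ∀ j, M j) m := by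
    obtain ⟨c, w, rfl⟩ := Φ.exists_eq_add_pow_smul _ hmod k z
    refine ⟨c, fun m hm => ?_⟩
    change _ = _ + (ℓ : ℤ_[ℓ]) ^ k • (w : ∀ j, M j) m
    rw [smul_eq_smul_of_pow_dvd_sub (htor m) (b := 0) (by simpa using pow_dvd_pow _ hm),
      zero_smul, add_zero]
  choose c hc using happrox
  obtain ⟨c₀, hc₀⟩ := PadicInt.exists_forall_exists_ge_pow_dvd_sub c
  refine ⟨c₀, Subtype.ext (funext fun m => ?_)⟩
  obtain ⟨k, hkm, hk⟩ := hc₀ m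
  rw [← hc k m hkm, hcoord, hcoord]
  exact Finset.sum_congr rfl fun i _ =>
    smul_eq_smul_of_pow_dvd_sub (htor m) (dvd_sub_comm.mp (hk i)) _

end invLimit

end InverseSystem

theorem stmt_10_general (ℓ : ℕ) [Fact ℓ.Prime] (M : ℕ → Type*) [∀ m, AddCommGroup (M m)]
    [∀ m, Finite (M m)]
    (htor : ∀ (m : ℕ) (x : M m), (ℓ ^ m) • x = 0)
    (t : ∀ m, M (m + 1) →+ M m)
    (hiso : ∃ N, ∀ m, N ≤ m →
      Function.Surjective (t m) ∧
      ∀ x : M (m + 1), t m x = 0 ↔ ∃ y : M (m + 1), (ℓ ^ m) • y = x) :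
    ∃ inst : Module ℤ_[ℓ] (invLimit t),
      (@IsFinZlModule ℓ _ (invLimit t) _ inst) ∧
      ∃ N, ∀ m, N ≤ m →
        Function.Surjective (fun x : invLimit t => (x : ∀ n, M n) m) ∧
        ∀ x : invLimit t, (x : ∀ n, M n) m = 0 ↔ ∃ y : invLimit t, (ℓ ^ m) • y = x := by
  obtain ⟨N, hN⟩ := hiso
  let _ : ∀ m, Module ℤ_[ℓ] (M m) := fun m => AddCommGroup.padicIntModule (htor m)
  have ht m : ∀ (a : ℤ_[ℓ]) (x : M (m + 1)), t m (a • x) = a • t m x :=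
    map_smul_of_pow_nsmul_eq_zero (htor (m + 1))
      (fun y => by rw [pow_succ, mul_nsmul, htor, nsmul_zero]) (t m)
  have hsurj m (hm : N ≤ m) : Function.Surjective (fun x : invLimit t => (x : ∀ n, M n) m) :=
    invLimit.surjective_eval m fun i hi => (hN i (hm.trans hi)).1
  have hdvd m (hm : N ≤ m) (x : invLimit t) (hx : (x : ∀ n, M n) m = 0) :
      ∃ y : invLimit t, ℓ ^ m • y = x :=
    invLimit.exists_pow_nsmul_eq_of_apply_eq_zero m (fun i hi => (hN i (hm.trans hi)).1)
      (fun i hi x => ((hN i (hm.trans hi)).2 x).1) x hx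
  let _ := invLimit.module ht
  refine ⟨inferInstance, ⟨fun n x => Int.cast_smul_eq_zsmul ℤ_[ℓ] n x, ?_⟩, N,
    fun m hm => ⟨hsurj m hm, fun x => ⟨hdvd m hm x, ?_⟩⟩⟩
  · refine invLimit.module_finite ht htor (N + 1) (hsurj _ N.le_succ) fun x hx => ?_
    obtain ⟨y, rfl⟩ := hdvd _ N.le_succ x hx
    exact ⟨ℓ ^ N • y, by rw [smul_smul, ← pow_succ']⟩
  · rintro ⟨y, rfl⟩
    exact htor m _

/-- Let (M_m) be an inverse system of finite abelian groups with M_m killed by ℓ^m,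
satisfying the Mittag-Leffler condition. If each transition map M_{m+1} → M_m induces an
isomorphism M_{m+1}/ℓ^m ≅ M_m for m large, then M = lim M_m is a finitely generated
ℤ_ℓ-module and M/ℓ^m ≅ M_m (via the projection) for m large. -/
theorem stmt_10 (ℓ : ℕ) [Fact ℓ.Prime] (M : ℕ → Type*) [∀ m, AddCommGroup (M m)]
    [∀ m, Finite (M m)]
    (htor : ∀ (m : ℕ) (x : M m), (ℓ ^ m) • x = 0)
    (t : ∀ m, M (m + 1) →+ M m)
    (hML : ∀ m, ∃ K, ∀ k, K ≤ k → Set.range (chainMap t m k) = Set.range (chainMap t m K))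
    (hiso : ∃ N, ∀ m, N ≤ m →
      Function.Surjective (t m) ∧
      ∀ x : M (m + 1), t m x = 0 ↔ ∃ y : M (m + 1), (ℓ ^ m) • y = x) :
    ∃ inst : Module ℤ_[ℓ] (invLimit t),
      (@IsFinZlModule ℓ _ (invLimit t) _ inst) ∧
      ∃ N, ∀ m, N ≤ m →
        Function.Surjective (fun x : invLimit t => (x : ∀ n, M n) m) ∧
        ∀ x : invLimit t, (x : ∀ n, M n) m = 0 ↔ ∃ y : invLimit t, (ℓ ^ m) • y = x :=
  stmt_10_general ℓ M htor t hiso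
end
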